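/- arXiv:2604.21565 — 5 statements merged into one kernel-verified Lean document; each statement's English description precedes it below -/
import Mathlib

section
/- Let B > 0 and let T be a real number with 0 < T < 1/(2B). If f, g : ℝ → ℂ are continuous integrable functions whose Fourier transforms vanish outside the interval [−B, B], and f(nT) = g(nT) for every integer n, then f = g. (Nyquist–Shannon sampling theorem: a signal containing no frequencies higher than B Hz is completely determined by samples spaced less than 1/(2B) apart.) -/
/-!
Apply the claim to `h = f - g`, which vanishes at every sample point `nT`. Since `1/T > 2B`, the
support of `𝓕 h` fits inside one period of length `1/T`, so `𝓕 h` defines a continuous function on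
the circle `ℝ / (1/T)ℤ`. By Fourier inversion its `n`-th Fourier coefficient is `T • h (-nT) = 0`.
A continuous function on the circle with vanishing Fourier coefficients is zero, hence `𝓕 h = 0`
and `h = 𝓕⁻ (𝓕 h) = 0`.
-/

open MeasureTheory Set
open scoped FourierTransform

section

variable {V E : Type*} [NormedAddCommGroup V] [InnerProductSpace ℝ V] [FiniteDimensional ℝ V]
  [MeasurableSpace V] [BorelSpace V] [NormedAddCommGroup E] [NormedSpace ℂ E]

theorem Real.fourier_sub {f g : V → E} (hf : Integrable f) (hg : Integrable g) :
    𝓕 (f - g) = 𝓕 f - 𝓕 g := by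
  funext ξ
  simp only [Real.fourier_eq, Pi.sub_apply, smul_sub]
  exact integral_sub ((Real.fourierIntegral_convergent_iff ξ).2 hf)
    ((Real.fourierIntegral_convergent_iff ξ).2 hg)

theorem Continuous.fourier_fourier_eq_neg [CompleteSpace E] {f : V → E} (hc : Continuous f)
    (hf : Integrable f) (hFf : Integrable (𝓕 f)) (x : V) : 𝓕 (𝓕 f) x = f (-x) := by
  simpa only [Real.fourierInv_eq_fourier_neg, neg_neg] using
    congr_fun (hc.fourierInv_fourier_eq hf hFf) (-x)

end

theorem AddCircle.eq_zero_of_fourierCoeff_eq_zero {p : ℝ} [Fact (0 < p)] {φ : AddCircle p → ℂ}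
    (hφ : Continuous φ) (h : ∀ n, fourierCoeff φ n = 0) : φ = 0 := by
  let Φ : C(AddCircle p, ℂ) := ⟨φ, hφ⟩
  have hcoeff : fourierCoeff Φ = 0 := funext h
  funext x
  have hx := has_pointwise_sum_fourier_series_of_summable (f := Φ)
    (by rw [hcoeff]; exact summable_zero) x
  simp only [hcoeff, Pi.zero_apply, zero_smul] at hx
  exact hx.unique hasSum_zero

theorem fourierCoeff_liftIco_eq_fourier {p a : ℝ} [hp : Fact (0 < p)] {F : ℝ → ℂ}
    (hF : Function.support F ⊆ Ioo a (a + p)) (n : ℤ) :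
    fourierCoeff (AddCircle.liftIco p a F) n = (1 / p) • 𝓕 F (n / p) := by
  have hap : a ≤ a + p := le_add_of_nonneg_right hp.out.le
  rw [fourierCoeff_eq_intervalIntegral _ _ a, Real.fourier_real_eq_integral_exp_smul]
  congr 1
  calc (∫ x : ℝ in a..a + p,
        fourier (-n) (x : AddCircle p) • AddCircle.liftIco p a F (x : AddCircle p))
      = ∫ x : ℝ in a..a + p, fourier (-n) (x : AddCircle p) • F x :=
        intervalIntegral.integral_congr_Ioo_of_le hap fun x hx => by
          rw [AddCircle.liftIco_coe_apply (Ioo_subset_Ico_self hx)]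
    _ = ∫ x : ℝ, fourier (-n) (x : AddCircle p) • F x :=
        intervalIntegral.integral_eq_integral_of_support_subset
          ((Function.support_smul_subset_right (fun x : ℝ ↦ fourier (-n) (x : AddCircle p))
            F).trans (hF.trans Ioo_subset_Ioc_self))
    _ = _ := by
        refine integral_congr_ae (ae_of_all _ fun x => ?_)
        simp only [fourier_coe_apply]
        push_cast
        ring_nf

theorem eq_zero_of_fourier_intCast_div_eq_zero {p a : ℝ} (hp : 0 < p) {F : ℝ → ℂ}
    (hFc : Continuous F) (hF : Function.support F ⊆ Ioo a (a + p))
    (h : ∀ n : ℤ, 𝓕 F (n / p) = 0) : F = 0 := by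
  have : Fact (0 < p) := ⟨hp⟩
  have hF_out : ∀ x ∉ Ioo a (a + p), F x = 0 := fun x hx => Function.notMem_support.1 (hF.mt hx)
  have hφ : Continuous (AddCircle.liftIco p a F) :=
    AddCircle.liftIco_continuous (by rw [hF_out a (by simp), hF_out (a + p) (by simp)])
      hFc.continuousOn
  have hφ0 := AddCircle.eq_zero_of_fourierCoeff_eq_zero hφ fun n => by
    rw [fourierCoeff_liftIco_eq_fourier hF, h, smul_zero]
  funext x
  by_cases hx : x ∈ Ico a (a + p)
  · rw [← AddCircle.liftIco_coe_apply (f := F) hx, hφ0, Pi.zero_apply, Pi.zero_apply]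
  · exact hF_out x fun hx' => hx (Ioo_subset_Ico_self hx')

theorem eq_zero_of_bandlimited_of_samples_eq_zero {B T : ℝ} (hT0 : 0 < T)
    (hT : T < 1 / (2 * B)) {h : ℝ → ℂ} (hc : Continuous h) (hi : Integrable h)
    (hB : ∀ ξ, B < |ξ| → 𝓕 h ξ = 0) (hsamp : ∀ n : ℤ, h (n * T) = 0) : h = 0 := by
  have h2B : 0 < 2 * B := one_div_pos.1 (hT0.trans hT)
  have hBT : 2 * B < T⁻¹ := (lt_inv_comm₀ hT0 h2B).1 (by rwa [← one_div])
  have hsupp : Function.support (𝓕 h) ⊆ Ioo (-(T⁻¹ / 2)) (-(T⁻¹ / 2) + T⁻¹) := by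
    intro ξ hξ
    have : |ξ| ≤ B := not_lt.1 fun hlt => hξ (hB ξ hlt)
    constructor <;> linarith [abs_le.1 this]
  have hFc : Continuous (𝓕 h) :=
    VectorFourier.fourierIntegral_continuous Real.continuous_fourierChar continuous_inner hi
  have hFi : Integrable (𝓕 h) := hFc.integrable_of_hasCompactSupport
    (HasCompactSupport.intro' isCompact_Icc isClosed_Icc
      fun ξ hξ => Function.notMem_support.1 fun h' => hξ (Ioo_subset_Icc_self (hsupp h')))
  have hF0 : 𝓕 h = 0 := eq_zero_of_fourier_intCast_div_eq_zero (inv_pos.2 hT0) hFc hsupp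
    fun n => by
      rw [div_inv_eq_mul, hc.fourier_fourier_eq_neg hi hFi, ← neg_mul, ← Int.cast_neg, hsamp]
  rw [← hc.fourierInv_fourier_eq hi hFi, hF0]
  funext x
  simp [Real.fourierInv_eq]

theorem nyquist_shannon_sampling_general
    (B T : ℝ) (hT0 : 0 < T) (hT : T < 1 / (2 * B))
    (f g : ℝ → ℂ)
    (hfc : Continuous f) (hgc : Continuous g)
    (hfi : Integrable f) (hgi : Integrable g)
    (hfB : ∀ ξ : ℝ, B < |ξ| → 𝓕 f ξ = 0)
    (hgB : ∀ ξ : ℝ, B < |ξ| → 𝓕 g ξ = 0)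
    (hsamp : ∀ n : ℤ, f (n * T) = g (n * T)) :
    f = g := by
  refine sub_eq_zero.1 (eq_zero_of_bandlimited_of_samples_eq_zero hT0 hT (hfc.sub hgc)
    (hfi.sub hgi) (fun ξ hξ => ?_) fun n => sub_eq_zero.2 (hsamp n))
  rw [Real.fourier_sub hfi hgi, Pi.sub_apply, hfB ξ hξ, hgB ξ hξ, sub_zero]

/-- **Nyquist–Shannon sampling theorem**: a continuous integrable signal whose Fourier
transform vanishes outside `[-B, B]` is completely determined by its samples at spacing
`T < 1/(2B)`. -/
theorem nyquist_shannon_sampling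
    (B T : ℝ) (hB : 0 < B) (hT0 : 0 < T) (hT : T < 1 / (2 * B))
    (f g : ℝ → ℂ)
    (hfc : Continuous f) (hgc : Continuous g)
    (hfi : Integrable f) (hgi : Integrable g)
    (hfB : ∀ ξ : ℝ, B < |ξ| → 𝓕 f ξ = 0)
    (hgB : ∀ ξ : ℝ, B < |ξ| → 𝓕 g ξ = 0)
    (hsamp : ∀ n : ℤ, f (n * T) = g (n * T)) :
    f = g :=
  nyquist_shannon_sampling_general B T hT0 hT f g hfc hgc hfi hgi hfB hgB hsamp
end

section
/- Let a, b, c ∈ ℝ with r := √(a² + b² + c²) > 0, and let U = exp(−(i/2)·(a·σz + b·σx + c·σy)). Then the transition probability from the ground state |0⟩ to the excited state |1⟩ satisfies |U_{1,0}|² = ((b² + c²)/r²) · sin²(r/2), where U_{1,0} denotes the entry of U in row 1, column 0 (rows and columns indexed by 0 and 1). -/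
/-!
The Pauli matrices square to `1` and pairwise anticommute, so `P = a σz + b σx + c σy` satisfies
`P² = r²`, and the generator `M = -(i/2) P` satisfies `M² = -(r/2)²`. Splitting the exponential
series of `M` into even and odd powers gives `U = cos (r/2) + (sin (r/2) / (r/2)) M`, whose
`(1,0)` entry is `-i (sin (r/2) / r) (b + c i)`.
-/

noncomputable section

def σx : Matrix (Fin 2) (Fin 2) ℂ := !![0, 1; 1, 0]
def σy : Matrix (Fin 2) (Fin 2) ℂ := !![0, -Complex.I; Complex.I, 0]
def σz : Matrix (Fin 2) (Fin 2) ℂ := !![1, 0; 0, -1]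

open Complex Nat

section BanachAlgebra

variable {A : Type*} [NormedRing A] [NormedAlgebra ℂ A] [CompleteSpace A]

theorem NormedSpace.exp_eq_cos_add_sin_div_smul_of_mul_self_eq {M : A} {s : ℂ} (hs : s ≠ 0)
    (hM : M * M = -(s ^ 2) • (1 : A)) :
    NormedSpace.exp M = cos s • (1 : A) + (sin s / s) • M := by
  have hpow_even (k : ℕ) : M ^ (2 * k) = ((-1) ^ k * s ^ (2 * k)) • (1 : A) := by
    rw [pow_mul, sq, hM, smul_pow, one_pow, neg_pow, pow_mul]
  have hcos : HasSum (fun k ↦ ((2 * k)! : ℂ)⁻¹ • M ^ (2 * k)) (cos s • (1 : A)) := by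
    refine ((hasSum_cos s).smul_const (1 : A)).congr_fun fun k ↦ ?_
    rw [hpow_even, smul_smul, div_eq_inv_mul]
  have hsin : HasSum (fun k ↦ ((2 * k + 1)! : ℂ)⁻¹ • M ^ (2 * k + 1)) ((sin s / s) • M) := by
    refine (((hasSum_sin s).div_const s).smul_const M).congr_fun fun k ↦ ?_
    rw [pow_succ, hpow_even, smul_mul_assoc, one_mul, smul_smul, pow_succ]
    field_simp
  exact (NormedSpace.exp_series_hasSum_exp' M).unique (hcos.even_add_odd hsin)

end BanachAlgebra

open scoped Matrix.Norms.Operator in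
theorem Matrix.exp_eq_cos_add_sin_div_smul_of_mul_self_eq {n : Type*} [Fintype n]
    [DecidableEq n] {M : Matrix n n ℂ} {s : ℂ} (hs : s ≠ 0)
    (hM : M * M = -(s ^ 2) • (1 : Matrix n n ℂ)) :
    NormedSpace.exp M = cos s • (1 : Matrix n n ℂ) + (sin s / s) • M :=
  NormedSpace.exp_eq_cos_add_sin_div_smul_of_mul_self_eq hs hM

theorem pauli_combination_mul_self (a b c : ℂ) :
    (a • σz + b • σx + c • σy) * (a • σz + b • σx + c • σy) = (a ^ 2 + b ^ 2 + c ^ 2) • 1 := by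
  ext i j
  fin_cases i <;> fin_cases j <;>
    simp [σx, σy, σz, Matrix.mul_apply, Fin.sum_univ_two] <;> ring_nf <;> simp [I_sq]

theorem pauli_combination_apply_one_zero (a b c : ℂ) :
    (a • σz + b • σx + c • σy) 1 0 = b + c * I := by
  simp [σx, σy, σz]

/-- For `U = exp(-(i/2)(a σz + b σx + c σy))` with `r = √(a² + b² + c²) > 0`, the
transition probability `|⟨1|U|0⟩|²` equals `((b² + c²)/r²) sin²(r/2)`. -/
theorem transition_probability (a b c r : ℝ)
    (hr : r = Real.sqrt (a ^ 2 + b ^ 2 + c ^ 2)) (hrpos : 0 < r)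
    (U : Matrix (Fin 2) (Fin 2) ℂ)
    (hU : U = NormedSpace.exp
      ((-(Complex.I / 2)) • ((a : ℂ) • σz + (b : ℂ) • σx + (c : ℂ) • σy))) :
    ‖U 1 0‖ ^ 2 =
      ((b ^ 2 + c ^ 2) / r ^ 2) * Real.sin (r / 2) ^ 2 := by
  set P := (a : ℂ) • σz + (b : ℂ) • σx + (c : ℂ) • σy
  have hr2 : (a : ℂ) ^ 2 + b ^ 2 + c ^ 2 = r ^ 2 := by
    norm_cast
    rw [hr, Real.sq_sqrt (by positivity)]
  have hsq : (-(I / 2)) • P * (-(I / 2)) • P = -((r / 2 : ℂ) ^ 2) • 1 := by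
    rw [smul_mul_smul_comm, pauli_combination_mul_self, smul_smul, hr2]
    congr 1
    linear_combination ((r : ℂ) ^ 2 / 4) * I_sq
  have hr0 : (r / 2 : ℂ) ≠ 0 := by exact_mod_cast (half_pos hrpos).ne'
  have hP : P 1 0 = b + c * I := pauli_combination_apply_one_zero _ _ _
  have hU10 : U 1 0 = -I * (Real.sin (r / 2) / r : ℝ) * (b + c * I) := by
    rw [hU, Matrix.exp_eq_cos_add_sin_div_smul_of_mul_self_eq hr0 hsq, Matrix.add_apply,
      Matrix.smul_apply, Matrix.smul_apply, Matrix.smul_apply, Matrix.one_apply_ne one_ne_zero,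
      hP, ofReal_div, ofReal_sin, ofReal_div, ofReal_ofNat]
    field_simp
    ring
  rw [hU10, norm_mul, norm_mul, norm_neg, norm_I, one_mul, norm_real, Real.norm_eq_abs, mul_pow,
    sq_abs, ← normSq_eq_norm_sq, normSq_add_mul_I]
  ring
end
end

section
/- Rabi oscillation formula for a resonantly detuned square pulse: let δ, A₀ ∈ ℝ with (δ, A₀) ≠ (0,0), let T ≥ 0, and let U(T) = exp(−(i T/2)·(δ·σz + A₀·σx)). Then the transition probability from |0⟩ to |1⟩ is |U(T)_{1,0}|² = (A₀²/(A₀² + δ²)) · sin²(√(δ² + A₀²) · T / 2). -/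
/-! Since `H = δ σz + A₀ σx` squares to `Ω² · 1` with `Ω = √(δ² + A₀²)`, the exponential series of
`t • H` splits into even and odd parts, `exp (t • H) = cosh (t Ω) · 1 + (sinh (t Ω) / Ω) · H`.
For `t = -iT/2` the `(1,0)` entry is `A₀ · sinh (-iΩT/2) / Ω = -i A₀ sin (ΩT/2) / Ω`. -/

noncomputable section

open Complex

theorem NormedSpace.exp_smul_of_mul_self_eq {𝔸 : Type*} [Ring 𝔸] [Algebra ℂ 𝔸] [TopologicalSpace 𝔸]
    [IsTopologicalRing 𝔸] [ContinuousSMul ℂ 𝔸] [T2Space 𝔸] {H : 𝔸} {ω : ℂ} (hω : ω ≠ 0)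
    (hH : H * H = ω ^ 2 • (1 : 𝔸)) (t : ℂ) :
    NormedSpace.exp (t • H) = cosh (t * ω) • (1 : 𝔸) + (sinh (t * ω) / ω) • H := by
  have hpow_even (k : ℕ) : (t • H) ^ (2 * k) = (t * ω) ^ (2 * k) • (1 : 𝔸) := by
    have hsq : (t • H) * (t • H) = (t * ω) ^ 2 • (1 : 𝔸) := by
      rw [smul_mul_smul_comm, hH, smul_smul, mul_pow, sq t]
    rw [pow_mul, sq, hsq, smul_pow, one_pow, ← pow_mul]
  have hpow_odd (k : ℕ) : (t • H) ^ (2 * k + 1) = ((t * ω) ^ (2 * k + 1) / ω) • H := by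
    rw [pow_succ, hpow_even, smul_mul_assoc, one_mul, smul_smul]
    congr 1
    field_simp
    ring
  rw [NormedSpace.exp_eq_tsum ℂ]
  refine HasSum.tsum_eq (HasSum.even_add_odd ?_ ?_)
  · convert (hasSum_cosh (t * ω)).smul_const (1 : 𝔸) using 2 with k
    rw [hpow_even, smul_smul, div_eq_inv_mul]
  · convert ((hasSum_sinh (t * ω)).div_const ω).smul_const H using 2 with k
    rw [hpow_odd, smul_smul]
    congr 1
    ring

theorem smul_σz_add_smul_σx_mul_self (a b : ℂ) :
    (a • σz + b • σx) * (a • σz + b • σx) = (a ^ 2 + b ^ 2) • (1 : Matrix (Fin 2) (Fin 2) ℂ) := by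
  ext i j
  fin_cases i <;> fin_cases j <;> simp [σx, σz, Matrix.mul_apply, Fin.sum_univ_two] <;> ring

theorem Complex.norm_sinh_ofReal_mul_I (x : ℝ) : ‖sinh (x * I)‖ = |Real.sin x| := by
  rw [sinh_mul_I, norm_mul, norm_I, mul_one, ← ofReal_sin, norm_real, Real.norm_eq_abs]

theorem rabi_square_pulse_general (δ A₀ : ℝ) (h : (δ, A₀) ≠ (0, 0)) (T : ℝ)
    (U : Matrix (Fin 2) (Fin 2) ℂ)
    (hU : U = NormedSpace.exp
      ((-(Complex.I * T / 2)) • ((δ : ℂ) • σz + (A₀ : ℂ) • σx))) :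
    ‖U 1 0‖ ^ 2 =
      (A₀ ^ 2 / (A₀ ^ 2 + δ ^ 2)) * Real.sin (Real.sqrt (δ ^ 2 + A₀ ^ 2) * T / 2) ^ 2 := by
  set Ω := Real.sqrt (δ ^ 2 + A₀ ^ 2)
  have hpos : 0 < δ ^ 2 + A₀ ^ 2 := by
    refine (add_nonneg (sq_nonneg δ) (sq_nonneg A₀)).lt_of_ne' fun h0 => h ?_
    rw [sq, sq, mul_self_add_mul_self_eq_zero] at h0
    rw [h0.1, h0.2]
  have hΩ : 0 < Ω := Real.sqrt_pos.2 hpos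
  have hΩsq : Ω ^ 2 = δ ^ 2 + A₀ ^ 2 := Real.sq_sqrt hpos.le
  have hH : ((δ : ℂ) • σz + (A₀ : ℂ) • σx) * ((δ : ℂ) • σz + (A₀ : ℂ) • σx)
      = (Ω : ℂ) ^ 2 • (1 : Matrix (Fin 2) (Fin 2) ℂ) := by
    rw [smul_σz_add_smul_σx_mul_self]
    congr 1
    exact_mod_cast hΩsq.symm
  have hphase : -(I * T / 2) * Ω = ((-(Ω * T / 2) : ℝ) : ℂ) * I := by push_cast; ring
  have hentry : U 1 0 = sinh (((-(Ω * T / 2) : ℝ) : ℂ) * I) / Ω * A₀ := by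
    rw [hU, NormedSpace.exp_smul_of_mul_self_eq (by exact_mod_cast hΩ.ne') hH, hphase]
    simp [σx, σz]
  rw [hentry, norm_mul, norm_div, norm_sinh_ofReal_mul_I, norm_real, norm_real, Real.norm_eq_abs,
    Real.norm_eq_abs, abs_of_pos hΩ, Real.sin_neg, abs_neg]
  rw [div_mul_eq_mul_div, div_pow, mul_pow, sq_abs, sq_abs, hΩsq]
  ring

/-- **Rabi oscillation formula for a detuned square pulse**:
for `U(T) = exp(-(iT/2)(δ σz + A₀ σx))`, the transition probability is
`|⟨1|U(T)|0⟩|² = (A₀²/(A₀² + δ²)) sin²(√(δ² + A₀²) T/2)`. -/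
theorem rabi_square_pulse (δ A₀ : ℝ) (h : (δ, A₀) ≠ (0, 0)) (T : ℝ) (hT : 0 ≤ T)
    (U : Matrix (Fin 2) (Fin 2) ℂ)
    (hU : U = NormedSpace.exp
      ((-(Complex.I * T / 2)) • ((δ : ℂ) • σz + (A₀ : ℂ) • σx))) :
    ‖U 1 0‖ ^ 2 =
      (A₀ ^ 2 / (A₀ ^ 2 + δ ^ 2)) * Real.sin (Real.sqrt (δ ^ 2 + A₀ ^ 2) * T / 2) ^ 2 :=
  rabi_square_pulse_general δ A₀ h T U hU
end
end

section
/- First-order Magnus term of the three-level RWA Hamiltonian under the DRAG substitution: let T ≥ 0, Δ ∈ ℝ with Δ ≠ 0, λ ∈ ℝ, let I : ℝ → ℝ be continuously differentiable with I(0) = I(T) = 0, and set Q(t) = −I'(t)/Δ. Define the 3×3 matrix-valued Hamiltonian H(t) = (1/2)·(I(t)·(σ01⁺ + σ01⁻) − Q(t)·(i·σ01⁺ − i·σ01⁻)) + (λ/2)·((I(t) + i·Q(t))·e^{i Δ t}·σ12⁺ + (I(t) − i·Q(t))·e^{−i Δ t}·σ12⁻). Then ∫₀ᵀ H(t) dt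 = (1/2)·(∫₀ᵀ I(t) dt)·(σ01⁺ + σ01⁻); i.e., to first order in the Magnus expansion the evolution is a pure X-rotation in the computational subspace, with no leakage to the state |2⟩ and no residual σ01^y term. -/
/-!
The quadrature `Q = -I'/Δ` integrates to `(I 0 - I T)/Δ = 0`, which removes the `σ01ʸ` term.
For the leakage terms, `(I ± iQ)(t) e^{±iΔt} = (±iΔ)⁻¹ d/dt (I(t) e^{±iΔt})`, so their integrals are
boundary values of `I` and vanish as well.
-/

noncomputable section

/-- `E j k` is the 3×3 complex matrix whose only nonzero entry is a `1` in row `j`,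
column `k`. -/
def E (j k : Fin 3) : Matrix (Fin 3) (Fin 3) ℂ := Matrix.single j k 1

open Complex MeasureTheory

theorem HasDerivAt.ofReal_mul_cexp_I_mul {f : ℝ → ℝ} {f' t : ℝ} (hf : HasDerivAt f f' t) (s : ℝ) :
    HasDerivAt (fun t : ℝ => (f t : ℂ) * cexp (I * s * t))
      ((f' + I * s * f t) * cexp (I * s * t)) t := by
  have hexp : HasDerivAt (fun t : ℝ => cexp (I * s * t)) (cexp (I * s * t) * (I * s)) t := by
    simpa using ((ofRealCLM.hasDerivAt (x := t)).const_mul (I * s)).cexp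
  exact (hf.ofReal_comp.mul hexp).congr_deriv (by ring)

theorem integral_sub_I_mul_deriv_div_mul_cexp {f : ℝ → ℝ} (hf : ContDiff ℝ 1 f) {s : ℝ} (hs : s ≠ 0)
    (a b : ℝ) :
    ∫ t in a..b, ((f t : ℂ) - I * deriv f t / s) * cexp (I * s * t) =
      (f b * cexp (I * s * b) - f a * cexp (I * s * a)) / (I * s) := by
  have hs' : (s : ℂ) ≠ 0 := ofReal_ne_zero.mpr hs
  have hderiv : ∀ t, HasDerivAt f (deriv f t) t := fun t =>
    (hf.differentiable one_ne_zero t).hasDerivAt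
  have hcont : Continuous (deriv f) := hf.continuous_deriv le_rfl
  have hf_cont : Continuous f := hf.continuous
  rw [sub_div]
  refine intervalIntegral.integral_eq_sub_of_hasDerivAt
    (f := fun t : ℝ => (f t : ℂ) * cexp (I * s * t) / (I * s)) (fun t _ => ?_)
    (Continuous.intervalIntegrable (by fun_prop) a b)
  refine ((hderiv t).ofReal_mul_cexp_I_mul s).div_const (I * s) |>.congr_deriv ?_
  field_simp
  linear_combination ((deriv f t : ℝ) : ℂ) * I_sq

theorem integral_sub_I_mul_deriv_div_mul_cexp_eq_zero {f : ℝ → ℝ} (hf : ContDiff ℝ 1 f) {s : ℝ}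
    (hs : s ≠ 0) {a b : ℝ} (ha : f a = 0) (hb : f b = 0) :
    ∫ t in a..b, ((f t : ℂ) - I * deriv f t / s) * cexp (I * s * t) = 0 := by
  simp [integral_sub_I_mul_deriv_div_mul_cexp hf hs, ha, hb]

theorem drag_first_order_magnus_general
    (T : ℝ) (Δ : ℝ) (hΔ : Δ ≠ 0) (lam : ℝ)
    (I : ℝ → ℝ) (hI : ContDiff ℝ 1 I) (hI0 : I 0 = 0) (hIT : I T = 0)
    (Q : ℝ → ℝ) (hQ : ∀ t : ℝ, Q t = -deriv I t / Δ)
    (H : ℝ → Matrix (Fin 3) (Fin 3) ℂ)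
    (hH : ∀ t : ℝ, H t =
      (1 / 2 : ℂ) • ((I t : ℂ) • (E 1 0 + E 0 1) -
          (Q t : ℂ) • (Complex.I • E 1 0 - Complex.I • E 0 1)) +
        ((lam : ℂ) / 2) •
          ((((I t : ℂ) + Complex.I * (Q t : ℂ)) * Complex.exp (Complex.I * Δ * t)) • E 2 1 +
            (((I t : ℂ) - Complex.I * (Q t : ℂ)) * Complex.exp (-(Complex.I * Δ * t))) • E 1 2)) :
    (Matrix.of fun i j : Fin 3 => ∫ t in (0 : ℝ)..T, H t i j) =
      ((1 / 2 : ℂ) * ((∫ t in (0 : ℝ)..T, I t : ℝ) : ℂ)) • (E 1 0 + E 0 1) := by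
  have hI'_cont : Continuous (deriv I) := hI.continuous_deriv le_rfl
  have hQ_integral : ∫ t in (0 : ℝ)..T, Q t = 0 := by
    simp [hQ, intervalIntegral.integral_div, hI0, hIT,
      intervalIntegral.integral_deriv_eq_sub (fun t _ => hI.differentiable one_ne_zero t)
        (hI'_cont.intervalIntegrable 0 T)]
  have hleak_21 :
      ∫ t in (0 : ℝ)..T, ((I t : ℂ) + Complex.I * Q t) * cexp (Complex.I * Δ * t) = 0 := by
    rw [← integral_sub_I_mul_deriv_div_mul_cexp_eq_zero hI hΔ hI0 hIT]
    refine intervalIntegral.integral_congr fun t _ => ?_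
    simp only [hQ]; push_cast; ring
  have hleak_12 :
      ∫ t in (0 : ℝ)..T, ((I t : ℂ) - Complex.I * Q t) * cexp (-(Complex.I * Δ * t)) = 0 := by
    rw [← integral_sub_I_mul_deriv_div_mul_cexp_eq_zero hI (neg_ne_zero.mpr hΔ) hI0 hIT]
    refine intervalIntegral.integral_congr fun t _ => ?_
    simp only [hQ]; push_cast; ring_nf
  have hI_int : IntervalIntegrable (fun t => (I t : ℂ)) volume 0 T :=
    (continuous_ofReal.comp hI.continuous).intervalIntegrable 0 T
  have hQ_int : IntervalIntegrable (fun t => (Q t : ℂ) * Complex.I) volume 0 T :=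
    (Continuous.intervalIntegrable (by simp only [hQ]; fun_prop) 0 T).mul_const _
  ext i j
  fin_cases i <;> fin_cases j <;>
    simp [hH, E, Matrix.single, intervalIntegral.integral_add, intervalIntegral.integral_sub,
      hI_int, hQ_int, hQ_integral, hleak_21, hleak_12, intervalIntegral.integral_ofReal]

/-- **First-order Magnus term of the three-level RWA Hamiltonian under the DRAG
substitution** `Q = -I'/Δ` with `I(0) = I(T) = 0`: the entrywise integral
`∫₀ᵀ H(t) dt` equals `(1/2)(∫₀ᵀ I(t) dt)(σ01⁺ + σ01⁻)`, a pure X-rotation of the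
computational subspace, with no leakage to `|2⟩` and no residual `σ01ʸ` term. -/
theorem drag_first_order_magnus
    (T : ℝ) (hT : 0 ≤ T) (Δ : ℝ) (hΔ : Δ ≠ 0) (lam : ℝ)
    (I : ℝ → ℝ) (hI : ContDiff ℝ 1 I) (hI0 : I 0 = 0) (hIT : I T = 0)
    (Q : ℝ → ℝ) (hQ : ∀ t : ℝ, Q t = -deriv I t / Δ)
    (H : ℝ → Matrix (Fin 3) (Fin 3) ℂ)
    (hH : ∀ t : ℝ, H t =
      (1 / 2 : ℂ) • ((I t : ℂ) • (E 1 0 + E 0 1) -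
          (Q t : ℂ) • (Complex.I • E 1 0 - Complex.I • E 0 1)) +
        ((lam : ℂ) / 2) •
          ((((I t : ℂ) + Complex.I * (Q t : ℂ)) * Complex.exp (Complex.I * Δ * t)) • E 2 1 +
            (((I t : ℂ) - Complex.I * (Q t : ℂ)) * Complex.exp (-(Complex.I * Δ * t))) • E 1 2)) :
    (Matrix.of fun i j : Fin 3 => ∫ t in (0 : ℝ)..T, H t i j) =
      ((1 / 2 : ℂ) * ((∫ t in (0 : ℝ)..T, I t : ℝ) : ℂ)) • (E 1 0 + E 0 1) :=
  drag_first_order_magnus_general T Δ hΔ lam I hI hI0 hIT Q hQ H hH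
end
end

section
/- Second-order leakage channel couples only the ground and leakage states: let I, Q : ℝ → ℝ, let λ, Δ ∈ ℝ, set f(t) = I(t) + i·Q(t), and define the 3×3 matrices H01(t) = (1/2)·(I(t)·(σ01⁺ + σ01⁻) − Q(t)·(i·σ01⁺ − i·σ01⁻)) and H12(t) = (λ/2)·(f(t)·e^{i Δ t}·σ12⁺ + conj(f(t))·e^{−i Δ t}·σ12⁻). Then for all t₁, t₂ ∈ ℝ there exist complex numbers r and s such that [H01(t₁), H12(t₂)] + [H12(t₁), H01(t₂)] = r·σ02⁺ + s·σ02⁻, where σ02⁺ = E_{20} and σ02⁻ = E_{02}; i.e., the cross terms of the second-order Magnus expansion act only between the states |0⟩ and |2⟩. -/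
noncomputable section

/-!
`H01 t` lies in the span of the ladder operators `E 1 0, E 0 1` and `H12 t` in that of
`E 2 1, E 1 2`. Among the products of these operators only `E 2 1 * E 1 0 = E 2 0` and
`E 0 1 * E 1 2 = E 0 2` survive, so every commutator `[H01 t₁, H12 t₂]` already lies in the
span of `E 2 0` and `E 0 2`, and so does the cross term, a difference of two of them.
-/

open Matrix

theorem single_add_single_commutator {n R : Type*} [Fintype n] [DecidableEq n] [Ring R]
    {i j k : n} (hij : i ≠ j) (hik : i ≠ k) (hjk : j ≠ k) (a b c d : R) :
    (single j i a + single i j b) * (single k j c + single j k d) -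
        (single k j c + single j k d) * (single j i a + single i j b) =
      single i k (b * d) - single k i (c * a) := by
  simp [add_mul, mul_add, hij, hij.symm, hik, hik.symm, hjk, hjk.symm]

theorem smul_E (a : ℂ) (j k : Fin 3) : a • E j k = single j k a := by
  simp [E, smul_single]

theorem second_order_leakage_channel_general
    (I Q : ℝ → ℝ) (lam Δ : ℝ)
    (f : ℝ → ℂ)
    (H01 H12 : ℝ → Matrix (Fin 3) (Fin 3) ℂ)
    (hH01 : ∀ t : ℝ, H01 t =
      (1 / 2 : ℂ) • ((I t : ℂ) • (E 1 0 + E 0 1) -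
        (Q t : ℂ) • (Complex.I • E 1 0 - Complex.I • E 0 1)))
    (hH12 : ∀ t : ℝ, H12 t =
      ((lam : ℂ) / 2) •
        ((f t * Complex.exp (Complex.I * Δ * t)) • E 2 1 +
          ((starRingEnd ℂ) (f t) * Complex.exp (-(Complex.I * Δ * t))) • E 1 2)) :
    ∀ t₁ t₂ : ℝ, ∃ r s : ℂ,
      (H01 t₁ * H12 t₂ - H12 t₂ * H01 t₁) + (H12 t₁ * H01 t₂ - H01 t₂ * H12 t₁) =
        r • E 2 0 + s • E 0 2 := by
  obtain ⟨a, b, h01⟩ : ∃ a b : ℝ → ℂ, ∀ t, H01 t = single 1 0 (a t) + single 0 1 (b t) :=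
    ⟨fun t => (I t - Complex.I * Q t) / 2, fun t => (I t + Complex.I * Q t) / 2,
      fun t => by rw [hH01, ← smul_E, ← smul_E]; module⟩
  obtain ⟨c, d, h12⟩ : ∃ c d : ℝ → ℂ, ∀ t, H12 t = single 2 1 (c t) + single 1 2 (d t) :=
    ⟨fun t => lam / 2 * (f t * Complex.exp (Complex.I * Δ * t)),
      fun t => lam / 2 * (starRingEnd ℂ (f t) * Complex.exp (-(Complex.I * Δ * t))),
      fun t => by rw [hH12, ← smul_E, ← smul_E]; module⟩
  have commutator := single_add_single_commutator (R := ℂ) (i := (0 : Fin 3)) (j := 1) (k := 2)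
    (by decide) (by decide) (by decide)
  intro t₁ t₂
  rw [← neg_sub (H01 t₂ * H12 t₁), h01, h01, h12, h12, commutator, commutator]
  refine ⟨c t₁ * a t₂ - c t₂ * a t₁, b t₁ * d t₂ - b t₂ * d t₁, ?_⟩
  simp only [← smul_E]
  module

/-- **Second-order leakage channel couples only the ground and leakage states**: for
`H01(t) = (1/2)(I(t)(σ01⁺ + σ01⁻) - Q(t)(iσ01⁺ - iσ01⁻))` and
`H12(t) = (λ/2)(f(t)e^{iΔt} σ12⁺ + conj(f(t))e^{-iΔt} σ12⁻)` with `f = I + iQ`,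
the cross terms `[H01(t₁), H12(t₂)] + [H12(t₁), H01(t₂)]` are a combination
`r·σ02⁺ + s·σ02⁻` of the operators `σ02⁺ = E₂₀` and `σ02⁻ = E₀₂` only. -/
theorem second_order_leakage_channel
    (I Q : ℝ → ℝ) (lam Δ : ℝ)
    (f : ℝ → ℂ) (hf : ∀ t : ℝ, f t = (I t : ℂ) + Complex.I * (Q t : ℂ))
    (H01 H12 : ℝ → Matrix (Fin 3) (Fin 3) ℂ)
    (hH01 : ∀ t : ℝ, H01 t =
      (1 / 2 : ℂ) • ((I t : ℂ) • (E 1 0 + E 0 1) -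
        (Q t : ℂ) • (Complex.I • E 1 0 - Complex.I • E 0 1)))
    (hH12 : ∀ t : ℝ, H12 t =
      ((lam : ℂ) / 2) •
        ((f t * Complex.exp (Complex.I * Δ * t)) • E 2 1 +
          ((starRingEnd ℂ) (f t) * Complex.exp (-(Complex.I * Δ * t))) • E 1 2)) :
    ∀ t₁ t₂ : ℝ, ∃ r s : ℂ,
      (H01 t₁ * H12 t₂ - H12 t₂ * H01 t₁) + (H12 t₁ * H01 t₂ - H01 t₂ * H12 t₁) =
        r • E 2 0 + s • E 0 2 :=
  second_order_leakage_channel_general I Q lam Δ f H01 H12 hH01 hH12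
end
end
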